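/- Let q be a Boolean self-join-free conjunctive query, D a tuple-independent probabilistic database, and Δ, Δ' two dissociations of q with Δ ≼ Δ' (i.e., ȳ_i ⊆ ȳ'_i for all i). Then P(q^Δ) ≤ P(q^{Δ'}). -/

import Mathlib

/-!
`P(q^Δ)` is the probability of the lineage of `q^Δ` on `D^Δ`, a monotone DNF whose variables
are the tuples of `D^Δ`. Restricting the tuples of `D^{Δ'}` to the variables of `q^Δ` maps the
lineage of `q^{Δ'}` onto the lineage of `q^Δ`, preserves tuple probabilities, and identifies no
two variables of one implicant (an implicant has one tuple per relation). So it suffices that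
merging each fibre of such a map into a single variable of the same probability cannot increase
the probability of a monotone DNF.

Merge one fibre `P` at a time, into `e ∈ P`. Fix a world `ω` and call `y ∈ P` live if some
implicant containing `y` has all its variables outside `P` true in `ω`. Swapping `e` with a live
variable (chosen as a function of the set of live variables, which the swap does not change) is a
probability-preserving involution on worlds, and it maps the worlds satisfying the merged formula
into worlds satisfying the original one.
-/

open scoped Classical

namespace PDB

noncomputable section

/-! ### Monotone DNF formulas over a finite variable set -/

/-- Probability that a monotone DNF formula (given by its finite set of implicants, each a
finite set of positive variables) is true, when each variable `x` is independently true with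
probability `p x`. -/
def dnfProb {X : Type*} [Fintype X] (p : X → ℝ) (F : Finset (Finset X)) : ℝ :=
  ∑ ω : X → Bool,
    (∏ x : X, if ω x = true then p x else 1 - p x) *
      (if ∃ T ∈ F, ∀ x ∈ T, ω x = true then 1 else 0)

/-- A prime implicant of a monotone DNF formula: a minimal implicant. -/
def IsPrimeImplicant {X : Type*} (F : Finset (Finset X)) (T : Finset X) : Prop :=
  T ∈ F ∧ ∀ S ∈ F, S ⊆ T → S = T

variable {A V dom : Type*}

/-! ### Self-join-free conjunctive queries: hierarchy and connectivity.
A self-join-free conjunctive query is given by its atoms: a family `atoms : A → Finset V`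
assigning to each of the (pairwise distinct) relation symbols its finite set of variables;
`H` denotes the set of head variables (treated as constants); all other variables are
existential.  A Boolean query has `H = ∅`. -/

/-- `at(x)`: the atoms among `S` that contain the variable `x`. -/
def atOf (atoms : A → Finset V) (S : Finset A) (x : V) : Finset A :=
  S.filter (fun i => x ∈ atoms i)

/-- The query consisting of the atoms `S` is hierarchical, with the variables in `H`
treated as constants (head variables): for any two existential variables, their atom sets
are comparable or disjoint. -/
def HierOn (atoms : A → Finset V) (S : Finset A) (H : Finset V) : Prop :=
  ∀ x : V, x ∉ H → ∀ y : V, y ∉ H →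
    atOf atoms S x ⊆ atOf atoms S y ∨ atOf atoms S x ∩ atOf atoms S y = ∅ ∨
      atOf atoms S y ⊆ atOf atoms S x

/-- A Boolean query (with all its atoms) is hierarchical. -/
def Hier [Fintype A] (atoms : A → Finset V) : Prop :=
  HierOn atoms Finset.univ ∅

/-- The set of atoms `S` is disconnected: it can be partitioned into two nonempty sets
sharing no variables. -/
def Disconn (atoms : A → Finset V) (S : Finset A) : Prop :=
  ∃ T : Finset A, T ⊆ S ∧ T.Nonempty ∧ (S \ T).Nonempty ∧
    ∀ i ∈ T, ∀ j ∈ S \ T, atoms i ∩ atoms j = ∅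

/-- `T` is a connected component of the set of atoms `S`: a maximal connected subset. -/
def IsComp (atoms : A → Finset V) (S T : Finset A) : Prop :=
  T ⊆ S ∧ T.Nonempty ∧ ¬ Disconn atoms T ∧
    ∀ U : Finset A, T ⊆ U → U ⊆ S → ¬ Disconn atoms U → U = T

/-- `xs` is a cut-set of the query with atoms `S`: a set of its variables whose removal
disconnects the query. -/
def IsCutSet (atoms : A → Finset V) (S : Finset A) (xs : Finset V) : Prop :=
  xs ⊆ S.sup atoms ∧ Disconn (fun i => atoms i \ xs) S

/-- a minimal cut-set (min-cut-set) -/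
def MinCut (atoms : A → Finset V) (S : Finset A) (xs : Finset V) : Prop :=
  IsCutSet atoms S xs ∧ ∀ ys : Finset V, ys ⊂ xs → ¬ IsCutSet atoms S ys

/-- the separator variables of a Boolean query: the variables occurring in every atom -/
def SepVars [Fintype A] [Fintype V] (atoms : A → Finset V) : Finset V :=
  Finset.univ.filter (fun x => ∀ i : A, x ∈ atoms i)

/-- the set of variables of a query -/
def varsOf [Fintype A] (atoms : A → Finset V) : Finset V :=
  Finset.univ.sup atoms

/-! ### Dissociations -/

/-- `Δ` is a dissociation of the query with atoms `atoms` and head variables `H`: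
each atom receives extra existential variables of the query that it does not already
contain. -/
def IsDiss [Fintype A] (atoms : A → Finset V) (H : Finset V) (Δ : A → Finset V) : Prop :=
  ∀ i : A, Δ i ⊆ (varsOf atoms \ H) \ atoms i

/-- the atoms of the dissociated query `q^Δ` -/
def dissAtoms (atoms Δ : A → Finset V) : A → Finset V := fun i => atoms i ∪ Δ i

/-- the partial dissociation order `Δ ≼ Δ'` -/
def dissLE (Δ Δ' : A → Finset V) : Prop := ∀ i : A, Δ i ⊆ Δ' i

/-- a safe dissociation: the dissociated query is hierarchical -/
def SafeDiss [Fintype A] (atoms : A → Finset V) (H : Finset V) (Δ : A → Finset V) : Prop :=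
  IsDiss atoms H Δ ∧ HierOn (dissAtoms atoms Δ) Finset.univ H

/-- a minimal safe dissociation: no smaller dissociation (in the order `≼`) is safe -/
def MinSafeDiss [Fintype A] (atoms : A → Finset V) (H : Finset V) (Δ : A → Finset V) : Prop :=
  SafeDiss atoms H Δ ∧
    ∀ Δ' : A → Finset V, SafeDiss atoms H Δ' → dissLE Δ' Δ → Δ' = Δ

/-! ### Tuple-independent probabilistic databases -/

/-- A tuple-independent probabilistic database for the query with atoms `atoms` over the
finite domain `dom`: each relation `i` is a finite set of tuples (functions from the
variables of the atom to the domain), each carrying a probability. -/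
structure DB (atoms : A → Finset V) (dom : Type*) where
  tuples : ∀ i : A, Finset ({x // x ∈ atoms i} → dom)
  prob : ∀ i : A, ({x // x ∈ atoms i} → dom) → ℝ

/-- all tuple probabilities lie in [0,1] -/
def DB.Valid {atoms : A → Finset V} (D : DB atoms dom) : Prop :=
  ∀ i : A, ∀ t ∈ D.tuples i, 0 ≤ D.prob i t ∧ D.prob i t ≤ 1

/-- the restriction of a valuation of all variables to the tuple format of atom `i` -/
def restrict (atoms : A → Finset V) (i : A) (ν : V → dom) : {x // x ∈ atoms i} → dom :=
  fun x => ν x.1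

/-- restriction of a tuple to a smaller variable set -/
def restrictTup {xs ys : Finset V} (h : xs ⊆ ys) (t : {x // x ∈ ys} → dom) :
    {x // x ∈ xs} → dom :=
  fun x => t ⟨x.1, h x.2⟩

/-- `P(q)`: the probability that the Boolean query with atoms `atoms` is true in a possible
world chosen by independently including each tuple `t` of `D` with probability `p(t)`. -/
def queryProb [Fintype A] (atoms : A → Finset V) (D : DB atoms dom) : ℝ :=
  ∑ W : ∀ i : A, {t // t ∈ D.tuples i} → Bool,
    (∏ i : A, ∏ t : {t // t ∈ D.tuples i},
        if W i t = true then D.prob i t.1 else 1 - D.prob i t.1) *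
      (if ∃ ν : V → dom, ∀ i : A,
            ∃ h : restrict atoms i ν ∈ D.tuples i, W i ⟨restrict atoms i ν, h⟩ = true
        then 1 else 0)

/-- The dissociated database `D^Δ`: relation `R_i^{ȳ_i}` contains one copy of each tuple
`t ∈ R_i` for every assignment of the added variables `ȳ_i` to domain values, with the same
probability as `t`. -/
def dissDB [Fintype dom] (atoms Δ : A → Finset V) (D : DB atoms dom) :
    DB (dissAtoms atoms Δ) dom where
  tuples i := Finset.univ.filter
    (fun t : {x // x ∈ dissAtoms atoms Δ i} → dom =>
      restrictTup (show atoms i ⊆ dissAtoms atoms Δ i from Finset.subset_union_left) t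
        ∈ D.tuples i)
  prob i t :=
    D.prob i
      (restrictTup (show atoms i ⊆ dissAtoms atoms Δ i from Finset.subset_union_left) t)

/-- `P(q^Δ)`: the probability of the dissociated query on the dissociated database. -/
def dissProb [Fintype A] [Fintype dom] (atoms Δ : A → Finset V) (D : DB atoms dom) : ℝ :=
  queryProb (dissAtoms atoms Δ) (dissDB atoms Δ D)

/-- The propagation score `ρ(q)`: the minimum of `P(q^Δ)` over all safe dissociations. -/
def propScore [Fintype A] [Fintype dom] (atoms : A → Finset V)
    (D : DB atoms dom) : ℝ :=
  sInf { r : ℝ | ∃ Δ : A → Finset V, SafeDiss atoms ∅ Δ ∧ r = dissProb atoms Δ D }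

/-- the database with all tuple probabilities scaled by the factor `f` -/
def scaleDB {atoms : A → Finset V} (D : DB atoms dom) (f : ℝ) : DB atoms dom where
  tuples := D.tuples
  prob i t := f * D.prob i t

/-- relation `i` is deterministic: all its tuples have probability 1 (otherwise it is
probabilistic) -/
def Deterministic {atoms : A → Finset V} (D : DB atoms dom) (i : A) : Prop :=
  ∀ t ∈ D.tuples i, D.prob i t = 1

/-- The lineage `F_{q,D}` of the Boolean query on `D`: the monotone DNF over the tuples of
`D` whose implicants correspond to the satisfying assignments of the query. -/
def lineage [Fintype A] [Fintype V] [Fintype dom] (atoms : A → Finset V)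
    (D : DB atoms dom) :
    Finset (Finset (Σ i : A, {x // x ∈ atoms i} → dom)) :=
  ((Finset.univ : Finset (V → dom)).filter
      (fun ν => ∀ i : A, restrict atoms i ν ∈ D.tuples i)).image
    (fun ν => Finset.univ.image
      (fun i : A => (⟨i, restrict atoms i ν⟩ : Σ i : A, {x // x ∈ atoms i} → dom)))

/-- The substitution `θ : D^Δ → D` mapping every tuple of a dissociated relation
`R_i^{ȳ_i}` to its projection onto the original variables of `R_i`. -/
def dissTupleMap (atoms Δ : A → Finset V) :
    (Σ i : A, {x // x ∈ dissAtoms atoms Δ i} → dom) →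
      Σ i : A, {x // x ∈ atoms i} → dom :=
  fun t =>
    ⟨t.1, restrictTup (show atoms t.1 ⊆ dissAtoms atoms Δ t.1 from Finset.subset_union_left)
      t.2⟩

/-! ### Functional dependencies -/

/-- `Determines Γ xs y`: the variable `y` is in the closure `xs⁺` of `xs` under the
functional dependencies `Γ`. -/
inductive Determines (Γ : Set (Finset V × V)) : Finset V → V → Prop
  | mem (xs : Finset V) (y : V) (h : y ∈ xs) : Determines Γ xs y
  | step (xs : Finset V) (fd : Finset V × V) (hfd : fd ∈ Γ)
      (hall : ∀ z ∈ fd.1, Determines Γ xs z) : Determines Γ xs fd.2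

/-- The functional dependency `fd` is an FD on the attributes of relation `j` that holds
in the database `D`. -/
def FDHolds (atoms : A → Finset V) (D : DB atoms dom) (j : A) (fd : Finset V × V) : Prop :=
  ∃ h1 : fd.1 ⊆ atoms j, ∃ h2 : fd.2 ∈ atoms j,
    ∀ t ∈ D.tuples j, ∀ t' ∈ D.tuples j,
      (∀ v : V, ∀ hv : v ∈ fd.1, t ⟨v, h1 hv⟩ = t' ⟨v, h1 hv⟩) →
        t ⟨fd.2, h2⟩ = t' ⟨fd.2, h2⟩

/-! ### Query plans -/

/-- Query plans: atoms, duplicate-eliminating projections (given by the retained head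
variables), and k-ary natural joins. -/
inductive Plan (A V : Type*) where
  | atom : A → Plan A V
  | proj : Finset V → Plan A V → Plan A V
  | join : List (Plan A V) → Plan A V

namespace Plan

/-- the head variables of a plan -/
def hvar (atoms : A → Finset V) : Plan A V → Finset V
  | .atom i => atoms i
  | .proj hv _ => hv
  | .join Ps => Ps.attach.foldr (fun P acc => hvar atoms P.1 ∪ acc) ∅
decreasing_by
  all_goals simp_wf
  all_goals try have := List.sizeOf_lt_of_mem P.2
  all_goals omega

/-- the multiset of atoms used by a plan -/
def atomsOf : Plan A V → Multiset A
  | .atom i => {i}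
  | .proj _ P => atomsOf P
  | .join Ps => Ps.attach.foldr (fun P acc => atomsOf P.1 + acc) 0
decreasing_by
  all_goals simp_wf
  all_goals try have := List.sizeOf_lt_of_mem P.2
  all_goals omega

def isProj : Plan A V → Prop
  | .proj _ _ => True
  | _ => False

def isJoin : Plan A V → Prop
  | .join _ => True
  | _ => False

/-- structural well-formedness: projections only retain available variables, joins are at
least binary, and joins and projections alternate -/
def WF (atoms : A → Finset V) : Plan A V → Prop
  | .atom _ => True
  | .proj hv P => hv ⊆ hvar atoms P ∧ ¬ isProj P ∧ WF atoms P
  | .join Ps => 2 ≤ Ps.length ∧ ∀ P ∈ Ps, ¬ isJoin P ∧ WF atoms P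
decreasing_by
  all_goals simp_wf
  all_goals try rename_i h; try have := List.sizeOf_lt_of_mem h
  all_goals omega

/-- a safe plan: at every join, all subplans have the same head variables -/
def Safe (atoms : A → Finset V) : Plan A V → Prop
  | .atom _ => True
  | .proj _ P => Safe atoms P
  | .join Ps => (∀ P ∈ Ps, Safe atoms P) ∧
      ∀ P ∈ Ps, ∀ Q ∈ Ps, hvar atoms P = hvar atoms Q
decreasing_by
  all_goals simp_wf
  all_goals try rename_i h; try have := List.sizeOf_lt_of_mem h
  all_goals omega

/-- `P` is a (well-formed) query plan for the query with atoms `atoms` and head variables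
`H`: it uses every atom exactly once and its output head variables are exactly `H`
(for a Boolean query, `H = ∅`, i.e. all existential variables are projected away). -/
def IsPlanFor [Fintype A] (atoms : A → Finset V) (H : Finset V) (P : Plan A V) : Prop :=
  WF atoms P ∧ atomsOf P = (Finset.univ : Finset A).val ∧ hvar atoms P = H

/-- the join variables: the union of the head variables of a list of subplans -/
def joinVars (atoms : A → Finset V) (Ps : List (Plan A V)) : Finset V :=
  (Ps.map (hvar atoms)).foldr (· ∪ ·) ∅

/-- Identification of plans up to join order, flattening of nested joins, and removal of
trivial (identity) projections. -/
inductive Equiv (atoms : A → Finset V) : Plan A V → Plan A V → Prop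
  | refl (P) : Equiv atoms P P
  | symm {P Q} : Equiv atoms P Q → Equiv atoms Q P
  | trans {P Q R} : Equiv atoms P Q → Equiv atoms Q R → Equiv atoms P R
  | projCongr (hv) {P Q} : Equiv atoms P Q → Equiv atoms (.proj hv P) (.proj hv Q)
  | joinCongr {Ps Qs} : List.Forall₂ (Equiv atoms) Ps Qs →
      Equiv atoms (.join Ps) (.join Qs)
  | joinPerm {Ps Qs} : Ps.Perm Qs → Equiv atoms (.join Ps) (.join Qs)
  | joinFlatten (Ps Qs Rs) :
      Equiv atoms (.join (Ps ++ .join Qs :: Rs)) (.join (Ps ++ Qs ++ Rs))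
  | projTriv {P} (hv) (h : hv = hvar atoms P) : Equiv atoms (.proj hv P) P

/-- The extensional score semantics of a plan evaluated on the database `D`: output tuples
are represented by total valuations `ν : V → dom` (only the values on the head variables
matter; duplicates are represented canonically by the default value `d₀` outside the head
variables).  Joins multiply scores, and duplicate-eliminating projections combine the
scores `s_1, …, s_n` of the tuples projecting to a common output tuple to
`1 - ∏ (1 - s_i)`. -/
def score [Fintype V] [Fintype dom] (atoms : A → Finset V) (D : DB atoms dom) (d₀ : dom) :
    Plan A V → (V → dom) → ℝ
  | .atom i, ν =>
      if restrict atoms i ν ∈ D.tuples i then D.prob i (restrict atoms i ν) else 0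
  | .proj hv P, ν =>
      1 - ∏ μ ∈ Finset.univ.filter (fun μ : V → dom =>
            (∀ v : V, v ∉ hvar atoms P → μ v = d₀) ∧ ∀ v ∈ hv, μ v = ν v),
          (1 - score atoms D d₀ P μ)
  | .join Ps, ν => (Ps.attach.map (fun P => score atoms D d₀ P.1 ν)).prod
decreasing_by
  all_goals simp_wf
  all_goals try have := List.sizeOf_lt_of_mem P.2
  all_goals omega

/-- the score of a Boolean plan -/
def bscore [Fintype V] [Fintype dom] [Inhabited dom] (atoms : A → Finset V)
    (D : DB atoms dom) (P : Plan A V) : ℝ :=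
  score atoms D default P (fun _ => default)

/-- Dropping the dissociated variables from a plan (for a dissociated query) to obtain the
corresponding plan `P^Δ` for the original query: every projection list is restricted to
the variables actually available in the original query. -/
def eraseTo (atoms : A → Finset V) : Plan A V → Plan A V
  | .atom i => .atom i
  | .proj hv P => .proj (hv ∩ hvar atoms (eraseTo atoms P)) (eraseTo atoms P)
  | .join Ps => .join (Ps.attach.map (fun P => eraseTo atoms P.1))
decreasing_by
  all_goals simp_wf
  all_goals try have := List.sizeOf_lt_of_mem P.2
  all_goals omega

/-- The dissociation `Δ^P` corresponding to a plan `P`: for each join operator with join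
variables `JVar = ⋃_j HVar(P_j)`, every relation occurring in subplan `P_j` receives the
variables `JVar ∖ HVar(P_j)`. -/
def dissOf (atoms : A → Finset V) : Plan A V → A → Finset V
  | .atom _ => fun _ => ∅
  | .proj _ P => dissOf atoms P
  | .join Ps => fun i =>
      Ps.attach.foldr (fun P acc =>
        (if i ∈ atomsOf P.1 then
            (joinVars atoms Ps \ hvar atoms P.1) ∪ dissOf atoms P.1 i
          else ∅) ∪ acc) ∅
decreasing_by
  all_goals simp_wf
  all_goals try have := List.sizeOf_lt_of_mem P.2
  all_goals omega

end Plan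

/-- The recursive algorithm `MP` enumerating the minimal query plans of the query with
atom set `S` and head variables `H` (head variables are treated as constants):
* if the query has a single atom, return the projection of that atom onto the head
  variables;
* if the query (after removing the head variables) is disconnected, return any join of
  minimal plans of its connected components (each component keeping the head variables
  occurring in it);
* otherwise, for any minimal cut-set `ys` of the query minus its head variables, return
  the plan projecting `ys` away from any minimal plan of the query with head variables
  `H ∪ ys`. -/
inductive MPrel (atoms : A → Finset V) : Finset A → Finset V → Plan A V → Prop
  | single (i : A) (H : Finset V) : MPrel atoms {i} H (.proj H (.atom i))
  | disc (S : Finset A) (H : Finset V) (parts : List (Finset A)) (Ps : List (Plan A V))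
      (hdup : parts.Nodup) (hlen : 2 ≤ parts.length)
      (hparts : ∀ T : Finset A, T ∈ parts ↔ IsComp (fun i => atoms i \ H) S T)
      (hlen2 : parts.length = Ps.length)
      (hPs : ∀ n : ℕ, ∀ h1 : n < parts.length, ∀ h2 : n < Ps.length,
        MPrel atoms parts[n] (H ∩ (parts[n]).sup atoms) Ps[n]) :
      MPrel atoms S H (.join Ps)
  | conn (S : Finset A) (H : Finset V) (ys : Finset V) (P : Plan A V)
      (hcard : 2 ≤ S.card)
      (hconn : ¬ Disconn (fun i => atoms i \ H) S)
      (hcut : MinCut (fun i => atoms i \ H) S ys)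
      (hP : MPrel atoms S (H ∪ ys) P) :
      MPrel atoms S H (.proj H P)

section MonotoneDNF

open Function

variable {Z W : Type*}

abbrev DNFSat (F : Finset (Finset Z)) (ω : Z → Bool) : Prop :=
  ∃ T ∈ F, ∀ x ∈ T, ω x = true

theorem dnfSat_image_image (f : Z → W) (F : Finset (Finset Z)) (ω : W → Bool) :
    DNFSat (F.image (Finset.image f)) ω ↔ DNFSat F (ω ∘ f) := by
  simp [DNFSat]

variable [Fintype Z] [Fintype W]

def worldWeight (r : Z → ℝ) (ω : Z → Bool) : ℝ :=
  ∏ z, if ω z = true then r z else 1 - r z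

theorem dnfProb_eq_sum (r : Z → ℝ) (F : Finset (Finset Z)) :
    dnfProb r F = ∑ ω, worldWeight r ω * if DNFSat F ω then 1 else 0 :=
  rfl

theorem worldWeight_nonneg {r : Z → ℝ} (hr : ∀ z, r z ∈ Set.Icc (0 : ℝ) 1) (ω : Z → Bool) :
    0 ≤ worldWeight r ω :=
  Finset.prod_nonneg fun z _ => by
    have := hr z
    split <;> linarith [this.1, this.2]

theorem worldWeight_comp_equiv (e : Z ≃ W) (r : W → ℝ) (ω : W → Bool) :
    worldWeight (r ∘ e) (ω ∘ e) = worldWeight r ω :=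
  e.prod_comp fun w => if ω w = true then r w else 1 - r w

theorem sum_worldWeight (r : Z → ℝ) : ∑ ω, worldWeight r ω = 1 := by
  simp only [worldWeight]
  rw [← Fintype.prod_sum (fun z (b : Bool) => if b = true then r z else 1 - r z)]
  simp

theorem sum_worldWeight_mul_comp_inl {Y : Type*} [Fintype Y] (r : Z ⊕ Y → ℝ)
    (g : (Z → Bool) → ℝ) :
    ∑ ω : Z ⊕ Y → Bool, worldWeight r ω * g (ω ∘ Sum.inl)
      = ∑ a, worldWeight (r ∘ Sum.inl) a * g a := by
  rw [← (Equiv.sumArrowEquivProdArrow Z Y Bool).symm.sum_comp, Fintype.sum_prod_type]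
  refine Finset.sum_congr rfl fun a _ => ?_
  have hsplit : ∀ b, worldWeight r (Sum.elim a b)
      = worldWeight (r ∘ Sum.inl) a * worldWeight (r ∘ Sum.inr) b := fun b =>
    Fintype.prod_sum_type _
  calc ∑ b, worldWeight r (Sum.elim a b) * g (Sum.elim a b ∘ Sum.inl)
      = worldWeight (r ∘ Sum.inl) a * g a * ∑ b, worldWeight (r ∘ Sum.inr) b := by
        rw [Finset.mul_sum]
        exact Finset.sum_congr rfl fun b _ => by rw [hsplit, Sum.elim_comp_inl]; ring
    _ = worldWeight (r ∘ Sum.inl) a * g a := by rw [sum_worldWeight, mul_one]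

theorem sum_worldWeight_mul_comp_of_injective [DecidableEq Z] {f : Z → W} (hf : Injective f)
    (r : W → ℝ) (g : (Z → Bool) → ℝ) :
    ∑ ω, worldWeight r ω * g (ω ∘ f) = ∑ a, worldWeight (r ∘ f) a * g a := by
  let e : Z ⊕ ↥(Set.range f)ᶜ ≃ W :=
    ((Equiv.ofInjective f hf).sumCongr (Equiv.refl _)).trans (Equiv.Set.sumCompl _)
  have he : e ∘ Sum.inl = f := rfl
  have hinl := sum_worldWeight_mul_comp_inl (r ∘ e) g
  rw [comp_assoc, he] at hinl
  have hreindex : ∑ ω, worldWeight r ω * g (ω ∘ f)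
      = ∑ ω, worldWeight (r ∘ e) ω * g (ω ∘ Sum.inl) :=
    Fintype.sum_equiv (Equiv.arrowCongr e.symm (Equiv.refl Bool)) _ _ fun ω => by
      change _ = worldWeight (r ∘ e) (ω ∘ e) * g ((ω ∘ e) ∘ Sum.inl)
      rw [worldWeight_comp_equiv, comp_assoc, he]
  rw [hreindex]
  convert hinl

theorem dnfProb_image_image_of_injective {f : Z → W} (hf : Injective f) (r : W → ℝ)
    (F : Finset (Finset Z)) :
    dnfProb r (F.image (Finset.image f)) = dnfProb (r ∘ f) F := by
  simp only [dnfProb_eq_sum, dnfSat_image_image]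
  exact sum_worldWeight_mul_comp_of_injective hf r fun a => if DNFSat F a then 1 else 0

end MonotoneDNF

section Collapse

variable {Z : Type*} [Fintype Z] (G : Finset (Finset Z)) (P : Set Z) (e : Z)

def collapse (z : Z) : Z := if z ∈ P then e else z

def liveVars (ω : Z → Bool) : Finset Z :=
  {y | y ∈ P ∧ ∃ T ∈ G, y ∈ T ∧ ∀ x ∈ T, x ∉ P → ω x = true}

def liveVar (ω : Z → Bool) : Z :=
  if h : (liveVars G P ω).Nonempty then h.choose else e

def swapLive (ω : Z → Bool) : Z → Bool :=
  ω ∘ Equiv.swap e (liveVar G P e ω)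

variable {G P e}

theorem liveVar_mem (he : e ∈ P) (ω : Z → Bool) : liveVar G P e ω ∈ P := by
  unfold liveVar
  split_ifs with h
  · exact (Finset.mem_filter.mp h.choose_spec).2.1
  · exact he

theorem liveVar_mem_liveVars {ω : Z → Bool} (h : (liveVars G P ω).Nonempty) :
    liveVar G P e ω ∈ liveVars G P ω := by
  rw [liveVar, dif_pos h]
  exact h.choose_spec

theorem swapLive_apply_of_notMem (he : e ∈ P) (ω : Z → Bool) {z : Z} (hz : z ∉ P) :
    swapLive G P e ω z = ω z := by
  have hze : z ≠ e := fun h => hz (h ▸ he)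
  have hzy : z ≠ liveVar G P e ω := fun h => hz (h ▸ liveVar_mem he ω)
  simp [swapLive, Equiv.swap_apply_of_ne_of_ne hze hzy]

theorem liveVars_swapLive (he : e ∈ P) (ω : Z → Bool) :
    liveVars G P (swapLive G P e ω) = liveVars G P ω := by
  ext y
  simp +contextual [liveVars, swapLive_apply_of_notMem he]

theorem swapLive_involutive (he : e ∈ P) : Function.Involutive (swapLive G P e) := by
  intro ω
  rw [swapLive, liveVar, liveVars_swapLive he, ← liveVar, swapLive]
  ext z
  simp

theorem worldWeight_swapLive (he : e ∈ P) {r : Z → ℝ} (hr : ∀ z ∈ P, r z = r e)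
    (ω : Z → Bool) : worldWeight r (swapLive G P e ω) = worldWeight r ω := by
  set s := Equiv.swap e (liveVar G P e ω)
  have hrs : r ∘ s = r := by
    ext z
    rcases eq_or_ne z e with rfl | hze
    · simp [s, hr _ (liveVar_mem he ω)]
    rcases eq_or_ne z (liveVar G P e ω) with rfl | hzy
    · simp [s, hr _ (liveVar_mem he ω)]
    · simp [s, Equiv.swap_apply_of_ne_of_ne hze hzy]
  rw [← worldWeight_comp_equiv s r ω, hrs]
  rfl

theorem dnfSat_of_dnfSat_swapLive_comp_collapse (he : e ∈ P)
    (hG : ∀ T ∈ G, ((T : Set Z) ∩ P).Subsingleton) {ω : Z → Bool}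
    (h : DNFSat G (swapLive G P e ω ∘ collapse P e)) : DNFSat G ω := by
  obtain ⟨T, hT, hTsat⟩ := h
  have houtside : ∀ x ∈ T, x ∉ P → ω x = true := fun x hx hxP => by
    simpa [collapse, hxP, swapLive_apply_of_notMem he ω hxP] using hTsat x hx
  by_cases hTP : ∃ y ∈ T, y ∈ P
  · obtain ⟨y, hyT, hyP⟩ := hTP
    have hlive : (liveVars G P ω).Nonempty :=
      ⟨y, by simpa [liveVars] using ⟨hyP, T, hT, hyT, houtside⟩⟩
    obtain ⟨hℓP, T', hT', hℓT', houtside'⟩ := by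
      simpa [liveVars] using liveVar_mem_liveVars (e := e) hlive
    have hℓ : ω (liveVar G P e ω) = true := by
      simpa [collapse, hyP, swapLive] using hTsat y hyT
    refine ⟨T', hT', fun x hx => ?_⟩
    by_cases hxP : x ∈ P
    · rwa [hG T' hT' ⟨hx, hxP⟩ ⟨hℓT', hℓP⟩]
    · exact houtside' x hx hxP
  · exact ⟨T, hT, fun x hx => houtside x hx fun hxP => hTP ⟨x, hx, hxP⟩⟩

theorem dnfProb_image_image_collapse_le (he : e ∈ P) {r : Z → ℝ}
    (hr01 : ∀ z, r z ∈ Set.Icc (0 : ℝ) 1) (hr : ∀ z ∈ P, r z = r e)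
    (hG : ∀ T ∈ G, ((T : Set Z) ∩ P).Subsingleton) :
    dnfProb r (G.image (Finset.image (collapse P e))) ≤ dnfProb r G := by
  let Φ := (swapLive_involutive (G := G) he).toPerm
  simp only [dnfProb_eq_sum, dnfSat_image_image]
  rw [← Equiv.sum_comp Φ]
  refine Finset.sum_le_sum fun ω _ => ?_
  rw [show Φ ω = swapLive G P e ω from rfl, worldWeight_swapLive he hr]
  refine mul_le_mul_of_nonneg_left ?_ (worldWeight_nonneg hr01 ω)
  by_cases h : DNFSat G (swapLive G P e ω ∘ collapse P e)
  · rw [if_pos h, if_pos (dnfSat_of_dnfSat_swapLive_comp_collapse he hG h)]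
  · rw [if_neg h]
    split <;> norm_num

end Collapse

section Fibers

open Function

theorem image_image_comp {α β γ : Type*} (g : β → γ) (h : α → β)
    (F : Finset (Finset α)) :
    F.image (Finset.image (g ∘ h)) = (F.image (Finset.image h)).image (Finset.image g) := by
  rw [Finset.image_image]
  congr 1
  ext T : 1
  simp [Finset.image_image]

variable {Z X : Type*} [Fintype Z]

theorem dnfProb_image_image_collapseFibers_le {θ : Z → X} {σ : X → Z} (hσ : LeftInverse θ σ)
    {r : Z → ℝ} (hr01 : ∀ z, r z ∈ Set.Icc (0 : ℝ) 1) (hr : ∀ z, r z = r (σ (θ z)))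
    {F : Finset (Finset Z)} (hF : ∀ T ∈ F, Set.InjOn θ T) (S : Finset X) :
    dnfProb r (F.image (Finset.image fun z => if θ z ∈ S then σ (θ z) else z))
      ≤ dnfProb r F := by
  induction S using Finset.induction_on with
  | empty =>
    have hid : (Finset.image fun z : Z => z) = id := funext fun _ => Finset.image_id'
    simp [hid]
  | @insert x₀ S hx₀ ih =>
    set c : Z → Z := fun z => if θ z ∈ S then σ (θ z) else z
    have hθc : ∀ z, θ (c z) = θ z := fun z => by
      by_cases h : θ z ∈ S <;> simp [c, h, hσ (θ z)]
    have hcomp : (fun z => if θ z ∈ insert x₀ S then σ (θ z) else z)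
        = collapse {z | θ z = x₀} (σ x₀) ∘ c := by
      ext z
      by_cases h : θ z = x₀
      · simp [collapse, c, h, hx₀]
      · by_cases hS : θ z ∈ S <;> simp [collapse, c, h, hS, hσ (θ z)]
    rw [hcomp, image_image_comp]
    refine le_trans (dnfProb_image_image_collapse_le
      (show σ x₀ ∈ {z | θ z = x₀} from hσ x₀) hr01 ?_ ?_) ih
    · intro z hz
      rw [hr z, show θ z = x₀ from hz]
    · intro T' hT'
      obtain ⟨T, hT, rfl⟩ := Finset.mem_image.mp hT'
      rintro _ ⟨hcu, hu₀⟩ _ ⟨hcv, hv₀⟩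
      obtain ⟨u, hu, rfl⟩ := Finset.mem_image.mp hcu
      obtain ⟨v, hv, rfl⟩ := Finset.mem_image.mp hcv
      have huv : θ u = θ v := by
        rw [← hθc u, ← hθc v, show θ (c u) = x₀ from hu₀, show θ (c v) = x₀ from hv₀]
      rw [hF T hT hu hv huv]

end Fibers

section Dissociation

open Function

variable {Z X : Type*} [Fintype Z] [Fintype X]

theorem dnfProb_image_image_le_of_surjective {θ : Z → X} (hθ : Surjective θ) {q : X → ℝ}
    (hq : ∀ x, q x ∈ Set.Icc (0 : ℝ) 1) {F : Finset (Finset Z)}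
    (hF : ∀ T ∈ F, Set.InjOn θ T) :
    dnfProb q (F.image (Finset.image θ)) ≤ dnfProb (q ∘ θ) F := by
  set σ := surjInv hθ
  have hσ : LeftInverse θ σ := rightInverse_surjInv hθ
  calc dnfProb q (F.image (Finset.image θ))
      = dnfProb (q ∘ θ) ((F.image (Finset.image θ)).image (Finset.image σ)) := by
        rw [dnfProb_image_image_of_injective (injective_surjInv hθ), comp_assoc,
          hσ.comp_eq_id, comp_id]
    _ = dnfProb (q ∘ θ)
          (F.image (Finset.image fun z => if θ z ∈ Finset.univ then σ (θ z) else z)) := by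
        simp only [Finset.mem_univ, if_true]
        rw [← image_image_comp]
        rfl
    _ ≤ dnfProb (q ∘ θ) F :=
        dnfProb_image_image_collapseFibers_le hσ (fun z => hq (θ z))
          (fun z => by simp [hσ (θ z)]) hF Finset.univ

theorem dnfProb_image_image_le {θ : Z → X} {q : X → ℝ}
    (hq : ∀ x, q x ∈ Set.Icc (0 : ℝ) 1) {F : Finset (Finset Z)}
    (hF : ∀ T ∈ F, Set.InjOn θ T) :
    dnfProb q (F.image (Finset.image θ)) ≤ dnfProb (q ∘ θ) F := by
  have hθ' : ∀ T ∈ F, Set.InjOn (Set.rangeFactorization θ) T := fun T hT _ hx _ hy hxy =>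
    hF T hT hx hy (congrArg Subtype.val hxy)
  have h := dnfProb_image_image_le_of_surjective Set.rangeFactorization_surjective
    (q := q ∘ Subtype.val) (fun x => hq x.1) hθ'
  rwa [← dnfProb_image_image_of_injective Subtype.val_injective, ← image_image_comp,
    Set.coe_comp_rangeFactorization, comp_assoc, Set.coe_comp_rangeFactorization] at h

end Dissociation

section Lineage

variable {atoms₁ atoms₂ : A → Finset V}

def tupleProb {atoms : A → Finset V} (D : DB atoms dom)
    (t : Σ i : A, {x // x ∈ atoms i} → dom) : ℝ :=
  if t.2 ∈ D.tuples t.1 then D.prob t.1 t.2 else 0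

theorem tupleProb_mem_Icc {atoms : A → Finset V} {D : DB atoms dom} (hD : D.Valid)
    (t : Σ i : A, {x // x ∈ atoms i} → dom) : tupleProb D t ∈ Set.Icc (0 : ℝ) 1 := by
  unfold tupleProb
  split_ifs with h
  · exact hD _ _ h
  · simp

def restrictSigma (h : ∀ i, atoms₁ i ⊆ atoms₂ i) :
    (Σ i : A, {x // x ∈ atoms₂ i} → dom) → Σ i : A, {x // x ∈ atoms₁ i} → dom :=
  Sigma.map id fun i => restrictTup (h i)

theorem DB.Valid.dissDB [Fintype dom] {atoms : A → Finset V} {D : DB atoms dom}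
    (hD : D.Valid) (Δ : A → Finset V) : (dissDB atoms Δ D).Valid := fun i _ ht =>
  hD i _ (Finset.mem_filter.mp ht).2

theorem restrict_mem_dissDB_tuples [Fintype dom] (atoms Δ : A → Finset V) (D : DB atoms dom)
    (i : A) (ν : V → dom) :
    restrict (dissAtoms atoms Δ) i ν ∈ (dissDB atoms Δ D).tuples i ↔
      restrict atoms i ν ∈ D.tuples i := by
  simp only [dissDB, Finset.mem_filter, Finset.mem_univ, true_and]
  rfl

theorem tupleProb_dissDB [Fintype dom] {atoms Δ Δ' : A → Finset V} (D : DB atoms dom)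
    (h : ∀ i, dissAtoms atoms Δ i ⊆ dissAtoms atoms Δ' i) :
    tupleProb (dissDB atoms Δ' D) = tupleProb (dissDB atoms Δ D) ∘ restrictSigma h := by
  funext ⟨i, t⟩
  simp only [tupleProb, dissDB, Function.comp_apply, Finset.mem_filter, Finset.mem_univ, true_and]
  rfl

variable [Fintype A] [Fintype V] [Fintype dom]

theorem dnfSat_lineage_iff (atoms : A → Finset V) (D : DB atoms dom)
    (ω : (Σ i : A, {x // x ∈ atoms i} → dom) → Bool) :
    DNFSat (lineage atoms D) ω ↔
      ∃ ν : V → dom, ∀ i, restrict atoms i ν ∈ D.tuples i ∧ ω ⟨i, restrict atoms i ν⟩ = true := by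
  simp [DNFSat, lineage, forall_and]

theorem queryProb_eq_dnfProb_lineage (atoms : A → Finset V) (D : DB atoms dom) :
    queryProb atoms D = dnfProb (tupleProb D) (lineage atoms D) := by
  let f : (Σ i : A, {t // t ∈ D.tuples i}) → Σ i : A, {x // x ∈ atoms i} → dom :=
    fun t => ⟨t.1, t.2.1⟩
  have hf : Function.Injective f := by
    rintro ⟨i, t⟩ ⟨j, s⟩ h
    simp only [f, Sigma.mk.injEq] at h
    obtain ⟨rfl, h⟩ := h
    simp [Subtype.ext (eq_of_heq h)]
  let Q : ((Σ i : A, {t // t ∈ D.tuples i}) → Bool) → Prop := fun a =>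
    ∃ ν : V → dom, ∀ i, ∃ h : restrict atoms i ν ∈ D.tuples i, a ⟨i, ⟨restrict atoms i ν, h⟩⟩ = true
  have hsat : ∀ ω, DNFSat (lineage atoms D) ω ↔ Q (ω ∘ f) := by
    simp [dnfSat_lineage_iff, f, Q]
  rw [dnfProb_eq_sum]
  -- here `convert` and the bare `congr`s below only reconcile `Decidable` and `Fintype` instances
  convert (sum_worldWeight_mul_comp_of_injective hf (tupleProb D)
    fun a => if Q a then (1 : ℝ) else 0).symm using 1
  · unfold queryProb
    symm
    refine Fintype.sum_equiv (Equiv.piCurry fun _ _ => Bool) _ _ fun a => ?_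
    congr 1
    · rw [worldWeight, Fintype.prod_sigma]
      refine Finset.prod_congr rfl fun i _ => Finset.prod_congr rfl fun t _ => ?_
      simp only [Function.comp_apply, tupleProb, f, t.2, if_true]
      congr
    · congr
  · refine Finset.sum_congr rfl fun ω _ => ?_
    simp only [hsat]

theorem lineage_eq_image_image (h : ∀ i, atoms₁ i ⊆ atoms₂ i) (D₁ : DB atoms₁ dom)
    (D₂ : DB atoms₂ dom)
    (hD : ∀ ν : V → dom,
      (∀ i, restrict atoms₁ i ν ∈ D₁.tuples i) ↔ ∀ i, restrict atoms₂ i ν ∈ D₂.tuples i) :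
    lineage atoms₁ D₁ = (lineage atoms₂ D₂).image (Finset.image (restrictSigma h)) := by
  simp only [lineage, Finset.image_image]
  congr 1
  · funext ν
    rw [Function.comp_apply, Finset.image_image]
    rfl
  · ext ν
    simp [hD ν]

theorem injOn_restrictSigma_of_mem_lineage (h : ∀ i, atoms₁ i ⊆ atoms₂ i) (D₂ : DB atoms₂ dom) :
    ∀ T ∈ lineage atoms₂ D₂, Set.InjOn (restrictSigma (dom := dom) h) T := by
  intro T hT
  obtain ⟨ν, -, rfl⟩ := Finset.mem_image.mp hT
  rintro _ hx _ hy hxy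
  obtain ⟨i, -, rfl⟩ := Finset.mem_image.mp hx
  obtain ⟨j, -, rfl⟩ := Finset.mem_image.mp hy
  obtain rfl : i = j := congrArg Sigma.fst hxy
  rfl

end Lineage

theorem dissociation_order_monotone_general
    {A V dom : Type*} [Fintype A] [Fintype V] [Fintype dom]
    (atoms : A → Finset V) (D : DB atoms dom) (hD : D.Valid)
    (Δ Δ' : A → Finset V)
    (hle : dissLE Δ Δ') :
    dissProb atoms Δ D ≤ dissProb atoms Δ' D := by
  have hsub : ∀ i, dissAtoms atoms Δ i ⊆ dissAtoms atoms Δ' i := fun i =>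
    Finset.union_subset_union_right (hle i)
  have hlineage := lineage_eq_image_image hsub (dissDB atoms Δ D) (dissDB atoms Δ' D)
    fun ν => by simp only [restrict_mem_dissDB_tuples]
  rw [dissProb, dissProb, queryProb_eq_dnfProb_lineage, queryProb_eq_dnfProb_lineage, hlineage,
    tupleProb_dissDB D hsub]
  -- `convert` only reconciles the `DecidableEq` instances used by `Finset.image`
  convert dnfProb_image_image_le (tupleProb_mem_Icc (hD.dissDB Δ))
    (injOn_restrictSigma_of_mem_lineage hsub _) using 4

/-- Partial dissociation order.  If `Δ ≼ Δ'` (pointwise inclusion of the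
added variable sets) for two dissociations of a Boolean self-join-free conjunctive query,
then `P(q^Δ) ≤ P(q^{Δ'})`. -/
theorem dissociation_order_monotone
    {A V dom : Type*} [Fintype A] [Fintype V] [Fintype dom]
    (atoms : A → Finset V) (D : DB atoms dom) (hD : D.Valid)
    (Δ Δ' : A → Finset V) (hΔ : IsDiss atoms ∅ Δ) (hΔ' : IsDiss atoms ∅ Δ')
    (hle : dissLE Δ Δ') :
    dissProb atoms Δ D ≤ dissProb atoms Δ' D :=
  dissociation_order_monotone_general atoms D hD Δ Δ' hle

end

end PDB
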